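/- arXiv:1405.4978 — 2 statements merged into one kernel-verified Lean document; each statement's English description precedes it below -/
import Mathlib

section
/- Let (X, ρ) be a compact metric space and let T : X → X be a continuous, open, distance-expanding map. Then there exists α > 0 with the following property: if there exist a point x ∈ X and an integer L ≥ 1 such that ρ(x, T^L(x)) ≤ α, then X contains a periodic point of T (i.e., there exist z ∈ X and n ≥ 1 with T^n(z) = z). -/
/-! Replacing `T` by a positive iterate, we may assume that `T` expands distances below `η` in a
single step. Openness and compactness make `T` uniformly locally surjective, so a point close to
`T^[m] x` has a preimage under `T^[m]` whose orbit shadows that of `x`, and these inverse branches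
contract by `l⁻¹` per step. Hence, if `T^[m] x` returns close to `x`, the inverse branch of `T^[m]`
is a contraction of a small closed ball around `x`, and its fixed point is periodic. Such near
returns always exist: by compactness every orbit comes back close to itself. -/

open Metric Function Set Filter Topology NNReal

/-- A map `T` on a metric space is *distance-expanding* if there exist `λ > 1`, `η > 0`
and `N ≥ 0` such that points at distance at most `η` have their `N`-th iterates at
distance at least `λ` times the original distance. -/
def DistanceExpanding {X : Type*} [MetricSpace X] (T : X → X) : Prop :=
  ∃ (l : ℝ) (η : ℝ) (N : ℕ), 1 < l ∧ 0 < η ∧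
    ∀ x y : X, dist x y ≤ η → l * dist x y ≤ dist (T^[N] x) (T^[N] y)

theorem IsOpenMap.iterate {X : Type*} [TopologicalSpace X] {f : X → X} (hf : IsOpenMap f) :
    ∀ n : ℕ, IsOpenMap f^[n]
  | 0 => IsOpenMap.id
  | n + 1 => (hf.iterate n).comp hf

theorem exists_lt_dist_lt_of_compactSpace {X : Type*} [MetricSpace X] [CompactSpace X]
    (u : ℕ → X) {β : ℝ} (hβ : 0 < β) : ∃ i j, i < j ∧ dist (u i) (u j) < β := by
  obtain ⟨a, -, φ, hφ, hconv⟩ := isCompact_univ.tendsto_subseq fun n => mem_univ (u n)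
  obtain ⟨n, hn⟩ := Metric.cauchySeq_iff'.1 hconv.cauchySeq β hβ
  exact ⟨φ n, φ (n + 1), hφ n.lt_succ_self, by rw [dist_comm]; exact hn (n + 1) n.le_succ⟩

theorem DistanceExpanding.exists_pos_iterate {X : Type*} [MetricSpace X] {T : X → X}
    (h : DistanceExpanding T) :
    ∃ (l η : ℝ) (N : ℕ), 0 < N ∧ 1 < l ∧ 0 < η ∧
      ∀ x y : X, dist x y ≤ η → l * dist x y ≤ dist (T^[N] x) (T^[N] y) := by
  obtain ⟨l, η, N, hl, hη, hexp⟩ := h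
  rcases N.eq_zero_or_pos with rfl | hN
  · -- for `N = 0` the expansion forces points at distance `≤ η` to coincide
    refine ⟨l, η, 1, one_pos, hl, hη, fun x y hxy => ?_⟩
    have hle : l * dist x y ≤ dist x y := hexp x y hxy
    have : dist x y = 0 := by nlinarith [dist_nonneg (x := x) (y := y)]
    rw [this, mul_zero]
    exact dist_nonneg
  · exact ⟨l, η, N, hN, hl, hη, hexp⟩

section Expanding

variable {X : Type*} [MetricSpace X] {S : X → X} {l η ξ : ℝ}

theorem IsOpenMap.isOpen_setOf_mem_image_ball (hS : IsOpenMap S) (δ : ℝ) :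
    IsOpen {q : X × X | q.2 ∈ S '' ball q.1 δ} := by
  rw [isOpen_iff_mem_nhds]
  rintro ⟨p, _⟩ ⟨w, hw, rfl⟩
  have hε : 0 < (δ - dist w p) / 2 := half_pos (sub_pos.2 hw)
  have hnhds : ball p ((δ - dist w p) / 2) ×ˢ (S '' ball w ((δ - dist w p) / 2)) ∈ 𝓝 (p, S w) :=
    prod_mem_nhds (ball_mem_nhds p hε)
      ((hS _ isOpen_ball).mem_nhds (mem_image_of_mem S (mem_ball_self hε)))
  filter_upwards [hnhds]
  rintro ⟨p', _⟩ ⟨hp', w', hw', rfl⟩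
  refine ⟨w', ?_, rfl⟩
  rw [mem_ball] at hp' hw' ⊢
  calc dist w' p' ≤ dist w' w + dist w p + dist p p' := dist_triangle4 _ _ _ _
    _ < δ := by rw [dist_comm p]; linarith

theorem exists_ball_subset_image_ball [CompactSpace X] (hc : Continuous S) (ho : IsOpenMap S)
    {δ : ℝ} (hδ : 0 < δ) : ∃ ξ > 0, ∀ p, ball (S p) ξ ⊆ S '' ball p δ := by
  have hK : IsCompact (range fun p => (p, S p)) := isCompact_range (continuous_id.prodMk hc)
  have hsub : (range fun p => (p, S p)) ⊆ {q : X × X | q.2 ∈ S '' ball q.1 δ} := by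
    rintro _ ⟨p, rfl⟩
    exact mem_image_of_mem S (mem_ball_self hδ)
  obtain ⟨ξ, hξ, hthick⟩ :=
    hK.exists_thickening_subset_open (ho.isOpen_setOf_mem_image_ball δ) hsub
  refine ⟨ξ, hξ, fun p y hy => @hthick (p, y) (mem_thickening_iff.2 ⟨(p, S p), mem_range_self p, ?_⟩)⟩
  simpa [Prod.dist_eq] using hy

theorem pow_mul_dist_le_dist_iterate (hl : 0 ≤ l)
    (hexp : ∀ x y : X, dist x y ≤ η → l * dist x y ≤ dist (S x) (S y)) :
    ∀ (m : ℕ) (w w' : X), (∀ k < m, dist (S^[k] w) (S^[k] w') ≤ η) →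
      l ^ m * dist w w' ≤ dist (S^[m] w) (S^[m] w')
  | 0, w, w', _ => by simp
  | m + 1, w, w', h => calc
      l ^ (m + 1) * dist w w' = l ^ m * (l * dist w w') := by ring
      _ ≤ l ^ m * dist (S w) (S w') :=
        mul_le_mul_of_nonneg_left (hexp w w' (h 0 m.succ_pos)) (pow_nonneg hl m)
      _ ≤ dist (S^[m] (S w)) (S^[m] (S w')) :=
        pow_mul_dist_le_dist_iterate hl hexp m _ _ fun k hk => h (k + 1) (by omega)

theorem exists_iterate_eq_of_dist_lt (hl : 1 ≤ l)
    (hexp : ∀ x y : X, dist x y ≤ η → l * dist x y ≤ dist (S x) (S y))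
    (hξ : ∀ p, ball (S p) ξ ⊆ S '' ball p (η / 2)) :
    ∀ (m : ℕ) (x y : X), dist y (S^[m] x) < ξ → ∃ w, S^[m] w = y ∧
      l ^ m * dist w x ≤ dist y (S^[m] x) ∧ ∀ k < m, dist (S^[k] w) (S^[k] x) < η / 2
  | 0, x, y, _ => ⟨y, rfl, by simp, fun k hk => absurd hk k.not_lt_zero⟩
  | m + 1, x, y, hy => by
    obtain ⟨w₁, rfl, hw₁, horb⟩ := exists_iterate_eq_of_dist_lt hl hexp hξ m (S x) y hy
    have h₁ : dist w₁ (S x) ≤ dist (S^[m] w₁) (S^[m + 1] x) :=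
      (le_mul_of_one_le_left dist_nonneg (one_le_pow₀ hl)).trans hw₁
    obtain ⟨w, hw, rfl⟩ := hξ x (mem_ball.2 (h₁.trans_lt hy))
    rw [mem_ball] at hw
    refine ⟨w, rfl, ?_, ?_⟩
    · calc l ^ (m + 1) * dist w x = l ^ m * (l * dist w x) := by ring
        _ ≤ l ^ m * dist (S w) (S x) :=
          mul_le_mul_of_nonneg_left (hexp w x (by linarith [dist_nonneg (x := w) (y := x)])) (pow_nonneg (by linarith) m)
        _ ≤ _ := hw₁
    · rintro (_ | k) hk
      · exact hw
      · exact horb k (by omega)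

/-- The periodic point is the fixed point of the inverse branch of `S^[m]` along the orbit of `x`,
which maps `closedBall x (ξ / (2 * l))` into itself and contracts by `l⁻¹`. -/
theorem exists_isPeriodicPt_of_dist_iterate_lt [CompleteSpace X] (hl : 1 < l) (hξ₀ : 0 < ξ)
    (hexp : ∀ x y : X, dist x y ≤ η → l * dist x y ≤ dist (S x) (S y))
    (hξ : ∀ p, ball (S p) ξ ⊆ S '' ball p (η / 2)) {x : X} {m : ℕ} (hm : 0 < m)
    (hx : dist x (S^[m] x) < (l - 1) * (ξ / (2 * l))) : ∃ z, IsPeriodicPt S m z := by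
  have hl₀ : 0 < l := by linarith
  set r := ξ / (2 * l) with hr
  have hr₀ : 0 < r := by positivity
  have hlr : l * r < ξ := by rw [hr]; field_simp; linarith
  have hpull : ∀ w : closedBall x r, ∃ W : closedBall x r,
      S^[m] W = w ∧ ∀ k < m, dist (S^[k] W) (S^[k] x) < η / 2 := by
    rintro ⟨w, hw⟩
    rw [mem_closedBall] at hw
    have hd : dist w (S^[m] x) < l * r := by linarith [dist_triangle w x (S^[m] x)]
    obtain ⟨W, rfl, hW, horb⟩ := exists_iterate_eq_of_dist_lt hl.le hexp hξ m x _ (hd.trans hlr)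
    have hWx : l * dist W x < l * r :=
      ((mul_le_mul_of_nonneg_right (le_self_pow₀ hl.le hm.ne') dist_nonneg).trans hW).trans_lt hd
    exact ⟨⟨W, mem_closedBall.2 (lt_of_mul_lt_mul_left hWx hl₀.le).le⟩, rfl, horb⟩
  choose F hFm hForb using hpull
  have hcontr : ∀ w w', dist (F w) (F w') ≤ l⁻¹ * dist w w' := by
    intro w w'
    have hexpm := pow_mul_dist_le_dist_iterate hl₀.le hexp m (F w) (F w') fun k hk =>
      (dist_triangle_right _ _ (S^[k] x)).trans (by linarith [hForb w k hk, hForb w' k hk])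
    rw [hFm, hFm] at hexpm
    rw [Subtype.dist_eq, Subtype.dist_eq, le_inv_mul_iff₀ hl₀]
    exact (mul_le_mul_of_nonneg_right (le_self_pow₀ hl.le hm.ne') dist_nonneg).trans hexpm
  have : CompleteSpace (closedBall x r) := isClosed_closedBall.completeSpace_coe
  have : Nonempty (closedBall x r) := ⟨⟨x, mem_closedBall_self hr₀.le⟩⟩
  have hF : ContractingWith (⟨l⁻¹, inv_nonneg.2 hl₀.le⟩ : ℝ≥0) F :=
    ⟨NNReal.coe_lt_one.1 (inv_lt_one_of_one_lt₀ hl),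
      LipschitzWith.of_dist_le_mul hcontr⟩
  have hfix := hFm (ContractingWith.fixedPoint F hF)
  rw [hF.fixedPoint_isFixedPt] at hfix
  exact ⟨_, hfix⟩

theorem exists_isPeriodicPt_of_isOpenMap [CompactSpace X] [Nonempty X] (hc : Continuous S)
    (ho : IsOpenMap S) (hl : 1 < l) (hη : 0 < η)
    (hexp : ∀ x y : X, dist x y ≤ η → l * dist x y ≤ dist (S x) (S y)) :
    ∃ z m, 0 < m ∧ IsPeriodicPt S m z := by
  obtain ⟨ξ, hξ₀, hξ⟩ := exists_ball_subset_image_ball hc ho (half_pos hη)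
  have hβ : 0 < (l - 1) * (ξ / (2 * l)) := mul_pos (by linarith) (by positivity)
  obtain ⟨x⟩ := ‹Nonempty X›
  obtain ⟨i, j, hij, hd⟩ := exists_lt_dist_lt_of_compactSpace (fun n => S^[n] x) hβ
  have hd' : dist (S^[i] x) (S^[j - i] (S^[i] x)) < (l - 1) * (ξ / (2 * l)) := by
    rwa [← iterate_add_apply, Nat.sub_add_cancel hij.le]
  obtain ⟨z, hz⟩ := exists_isPeriodicPt_of_dist_iterate_lt hl hξ₀ hexp hξ (by omega) hd'
  exact ⟨z, j - i, by omega, hz⟩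

end Expanding

theorem stmt0 {X : Type*} [MetricSpace X] [CompactSpace X] (T : X → X)
    (hcont : Continuous T) (hopen : IsOpenMap T) (hexp : DistanceExpanding T) :
    ∃ α : ℝ, 0 < α ∧
      ((∃ (x : X) (L : ℕ), 1 ≤ L ∧ dist x (T^[L] x) ≤ α) →
        ∃ (z : X) (n : ℕ), 1 ≤ n ∧ T^[n] z = z) := by
  refine ⟨1, one_pos, ?_⟩
  rintro ⟨x, -⟩
  have : Nonempty X := ⟨x⟩
  obtain ⟨l, η, N, hN, hl, hη, hexpN⟩ := hexp.exists_pos_iterate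
  obtain ⟨z, m, hm, hz⟩ :=
    exists_isPeriodicPt_of_isOpenMap (hcont.iterate N) (hopen.iterate N) hl hη hexpN
  exact ⟨z, N * m, Nat.mul_pos hN hm, by rw [iterate_mul]; exact hz⟩
end

section
/- Let f : ℂ → ℂ be an entire (holomorphic) function, let Λ ⊆ ℂ be a compact set with f(Λ) ⊆ Λ, let N ≥ 1 be an integer and λ > 1 a real number, and let U ⊆ ℂ be an open set containing Λ such that ‖(f^N)'(x)‖ ≥ λ for every x ∈ U, where (f^N)' denotes the derivative of the N-th iterate of f. Then there exists η > 0 such that for all x, y ∈ Λ with |x − y| ≤ η one has |f^N(x) − f^N(y)| ≥ λ·|x − y|; in particular the restriction of f to Λ is distance-expanding. -/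
open Metric Set

/-- Local expansion: near each point of an open set where `‖deriv g‖ ≥ l`, an entire `g`
expands distances by factor `l`. -/
lemma local_expand (g : ℂ → ℂ) (hgd : Differentiable ℂ g) (l : ℝ) (hl0 : 0 < l)
    (U : Set ℂ) (hU : IsOpen U) (hderiv : ∀ x ∈ U, l ≤ ‖deriv g x‖)
    (z : ℂ) (hzU : z ∈ U) :
    ∃ ε > 0, ∀ x ∈ Metric.ball z ε, ∀ y ∈ Metric.ball z ε,
      l * ‖x - y‖ ≤ ‖g x - g y‖ := by
  have hne : ∀ w ∈ U, deriv g w ≠ 0 := by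
    intro w hw h
    have := hderiv w hw
    rw [h, norm_zero] at this
    linarith
  have hsd : HasStrictDerivAt g (deriv g z) z :=
    (hgd.analyticAt z).hasStrictFDerivAt.hasStrictDerivAt
  have hE := hsd.hasStrictFDerivAt_equiv (hne z hzU)
  set e0 := hE.toOpenPartialHomeomorph g with he0
  have hcoe0 : (e0 : ℂ → ℂ) = g := hE.toOpenPartialHomeomorph_coe
  set e := e0.restrOpen U hU with he
  have hcoe : (e : ℂ → ℂ) = g := hcoe0
  have hsymm : (e.symm : ℂ → ℂ) = (e0.symm : ℂ → ℂ) := rfl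
  have hsrc : e.source = e0.source ∩ U := e0.restrOpen_source U hU
  have hzsrc : z ∈ e.source := by
    rw [hsrc]
    exact ⟨hE.mem_toOpenPartialHomeomorph_source, hzU⟩
  have hsrcU : e.source ⊆ U := by rw [hsrc]; exact inter_subset_right
  have hgz : g z ∈ e.target := by
    have := e.map_source hzsrc
    rwa [show e z = g z from congrFun hcoe z] at this
  obtain ⟨r, hr, hball⟩ := Metric.isOpen_iff.1 e.open_target (g z) hgz
  -- the inverse is (1/l)-Lipschitz on ball (g z) r
  have hmean : ∀ a ∈ Metric.ball (g z) r, ∀ b ∈ Metric.ball (g z) r,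
      ‖e.symm a - e.symm b‖ ≤ l⁻¹ * ‖a - b‖ := by
    have hD : ∀ b ∈ Metric.ball (g z) r,
        HasFDerivWithinAt e.symm
          (ContinuousLinearMap.smulRight (1 : ℂ →L[ℂ] ℂ) (deriv g (e.symm b))⁻¹)
          (Metric.ball (g z) r) b := by
      intro b hb
      have hb' : b ∈ e.target := hball hb
      have hw : e.symm b ∈ e.source := e.map_target hb'
      have hwU : e.symm b ∈ U := hsrcU hw
      have hgw : HasDerivAt (e : ℂ → ℂ) (deriv g (e.symm b)) (e.symm b) := by
        rw [hcoe]; exact (hgd (e.symm b)).hasDerivAt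
      have hD' : HasDerivAt e.symm (deriv g (e.symm b))⁻¹ b :=
        e.hasDerivAt_symm hb' (hne _ hwU) hgw
      exact (hasDerivAt_iff_hasFDerivAt.1 hD').hasFDerivWithinAt
    have hbound : ∀ b ∈ Metric.ball (g z) r,
        ‖ContinuousLinearMap.smulRight (1 : ℂ →L[ℂ] ℂ) (deriv g (e.symm b))⁻¹‖ ≤ l⁻¹ := by
      intro b hb
      have hwU : e.symm b ∈ U := hsrcU (e.map_target (hball hb))
      rw [ContinuousLinearMap.norm_smulRight_apply, norm_one, one_mul, norm_inv]
      exact inv_anti₀ hl0 (hderiv _ hwU)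
    intro a ha b hb
    exact (convex_ball (g z) r).norm_image_sub_le_of_norm_hasFDerivWithin_le hD hbound hb ha
  -- choose ε
  obtain ⟨ε1, hε1, hε1src⟩ := Metric.isOpen_iff.1 e.open_source z hzsrc
  obtain ⟨ε2, hε2, hε2c⟩ := Metric.continuousAt_iff.1 (hgd.continuous.continuousAt (x := z)) r hr
  refine ⟨min ε1 ε2, lt_min hε1 hε2, ?_⟩
  intro x hx y hy
  have hxs : x ∈ e.source := hε1src (Metric.ball_subset_ball (min_le_left _ _) hx)
  have hys : y ∈ e.source := hε1src (Metric.ball_subset_ball (min_le_left _ _) hy)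
  have hgx : g x ∈ Metric.ball (g z) r :=
    hε2c (Metric.ball_subset_ball (min_le_right _ _) hx)
  have hgy : g y ∈ Metric.ball (g z) r :=
    hε2c (Metric.ball_subset_ball (min_le_right _ _) hy)
  have hlx : e.symm (g x) = x := by
    have := e.left_inv hxs
    rwa [show e x = g x from congrFun hcoe x] at this
  have hly : e.symm (g y) = y := by
    have := e.left_inv hys
    rwa [show e y = g y from congrFun hcoe y] at this
  have := hmean (g x) hgx (g y) hgy
  rw [hlx, hly] at this
  have h2 : l * ‖x - y‖ ≤ l * (l⁻¹ * ‖g x - g y‖) :=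
    mul_le_mul_of_nonneg_left this (le_of_lt hl0)
  rwa [← mul_assoc, mul_inv_cancel₀ (ne_of_gt hl0), one_mul] at h2

theorem stmt4 (f : ℂ → ℂ) (hf : Differentiable ℂ f) (Λ : Set ℂ) (hΛ : IsCompact Λ)
    (hinv : Set.MapsTo f Λ Λ) (N : ℕ) (hN : 1 ≤ N) (l : ℝ) (hl : 1 < l)
    (U : Set ℂ) (hU : IsOpen U) (hΛU : Λ ⊆ U)
    (hderiv : ∀ x ∈ U, l ≤ ‖deriv (f^[N]) x‖) :
    ∃ η : ℝ, 0 < η ∧ ∀ x ∈ Λ, ∀ y ∈ Λ,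
      ‖x - y‖ ≤ η → l * ‖x - y‖ ≤ ‖f^[N] x - f^[N] y‖ := by
  have hl0 : (0:ℝ) < l := lt_trans one_pos hl
  have hgd : Differentiable ℂ (f^[N]) := hf.iterate N
  have key : ∀ z : Λ, ∃ ε > 0, ∀ x ∈ Metric.ball (z : ℂ) ε, ∀ y ∈ Metric.ball (z : ℂ) ε,
      l * ‖x - y‖ ≤ ‖f^[N] x - f^[N] y‖ := fun z =>
    local_expand (f^[N]) hgd l hl0 U hU hderiv z (hΛU z.2)
  choose ε hε hexp using key
  obtain ⟨δ, hδ, Hδ⟩ := lebesgue_number_lemma_of_metric (c := fun z : Λ => Metric.ball (z : ℂ) (ε z))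
    hΛ (fun _ => Metric.isOpen_ball)
    (fun x hx => Set.mem_iUnion.2 ⟨⟨x, hx⟩, Metric.mem_ball_self (hε ⟨x, hx⟩)⟩)
  refine ⟨δ / 2, by linarith, ?_⟩
  intro x hx y hy hxy
  obtain ⟨i, hi⟩ := Hδ x hx
  have hx' : x ∈ Metric.ball (i : ℂ) (ε i) := hi (Metric.mem_ball_self hδ)
  have hy' : y ∈ Metric.ball (i : ℂ) (ε i) := by
    apply hi
    rw [Metric.mem_ball, dist_eq_norm]
    calc ‖y - x‖ = ‖x - y‖ := by rw [norm_sub_rev]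
    _ ≤ δ / 2 := hxy
    _ < δ := by linarith
  exact hexp i x hx' y hy'
end
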